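/- Let (E, Λ, p) be a locally Hilbert space model whose index set Λ is linearly ordered, and fix λ₀ ∈ Λ. Then the orthogonal projection P : E → E onto the complete submodule p λ₀ belongs to 𝓛(E), satisfies ⟨P x, y⟩ = ⟨x, P y⟩ for all x, y ∈ E, P ∘ P = P, and has range equal to p λ₀. In particular, p λ₀ is orthogonally complementable in E, i.e. there exists a symmetric idempotent element of 𝓛(E) with range p λ₀. -/

import Mathlib

/-!
Since `Λ` is a chain, `p λ₀` and any `p λ` are nested, and orthogonal projections onto nested
subspaces commute. A bounded operator commuting with `P_λ` leaves `p λ = range P_λ` invariant,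
so `P_λ₀` lies in `𝓛(E)`.
-/

open scoped InnerProductSpace

/-- The orthogonal projection of an inner product space onto a complete submodule,
viewed as a continuous linear map of the ambient space into itself. -/
noncomputable def projL {E : Type*} [NormedAddCommGroup E] [InnerProductSpace ℂ E]
    (K : Submodule ℂ E) [CompleteSpace K] : E →L[ℂ] E :=
  K.subtypeL.comp K.orthogonalProjectionOnto

/-- An element of `𝓛(E)` for the locally Hilbert space model determined by the family `p`:
a linear map on `E` leaving each `p l` invariant, whose restriction to each `p l` is a
continuous (bounded) operator, and which commutes with each orthogonal projection `projL (p l)`. -/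
structure LocOp {E : Type*} [NormedAddCommGroup E] [InnerProductSpace ℂ E]
    {Λ : Type*} (p : Λ → Submodule ℂ E) [∀ l, CompleteSpace (p l)] where
  toFun : E →ₗ[ℂ] E
  restr : ∀ l, p l →L[ℂ] p l
  restr_eq : ∀ l (x : p l), (restr l x : E) = toFun x
  proj_comm : ∀ l (x : E), toFun (projL (p l) x) = projL (p l) (toFun x)

namespace Submodule

variable {𝕜 E : Type*} [RCLike 𝕜] [NormedAddCommGroup E] [InnerProductSpace 𝕜 E]

theorem commute_starProjection_of_le {U V : Submodule 𝕜 E}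
    [U.HasOrthogonalProjection] [V.HasOrthogonalProjection] (h : U ≤ V) :
    Commute U.starProjection V.starProjection := by
  have hVU : V.starProjection ∘L U.starProjection = U.starProjection :=
    ContinuousLinearMap.ext fun x =>
      starProjection_eq_self_iff.mpr (h (U.starProjection_apply_mem x))
  exact (starProjection_comp_starProjection_of_le h).trans hVU.symm

theorem commute_starProjection_of_le_total {U V : Submodule 𝕜 E}
    [U.HasOrthogonalProjection] [V.HasOrthogonalProjection] (h : U ≤ V ∨ V ≤ U) :
    Commute U.starProjection V.starProjection :=
  h.elim commute_starProjection_of_le fun h => (commute_starProjection_of_le h).symm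

theorem apply_mem_of_commute_starProjection {K : Submodule 𝕜 E} [K.HasOrthogonalProjection]
    {T : E →L[𝕜] E} (hT : Commute T K.starProjection) {x : E} (hx : x ∈ K) : T x ∈ K := by
  have hTx : T (K.starProjection x) = K.starProjection (T x) := congrArg (· x) hT.eq
  rw [← starProjection_eq_self_iff.mpr hx, hTx]
  exact K.starProjection_apply_mem _

end Submodule

theorem projL_eq_starProjection {E : Type*} [NormedAddCommGroup E] [InnerProductSpace ℂ E]
    (K : Submodule ℂ E) [CompleteSpace K] : projL K = K.starProjection :=
  rfl

namespace LocOp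

variable {E : Type*} [NormedAddCommGroup E] [InnerProductSpace ℂ E]
  {Λ : Type*} {p : Λ → Submodule ℂ E} [∀ l, CompleteSpace (p l)]

noncomputable def ofCommute (T : E →L[ℂ] E) (hT : ∀ l, Commute T (projL (p l))) : LocOp p where
  toFun := T
  restr l := T.restrict fun _ => Submodule.apply_mem_of_commute_starProjection (hT l)
  restr_eq _ _ := rfl
  proj_comm l x := congrArg (· x) (hT l).eq

@[simp]
theorem ofCommute_toFun (T : E →L[ℂ] E) (hT : ∀ l, Commute T (projL (p l))) :
    (ofCommute T hT).toFun = T :=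
  rfl

end LocOp

theorem locallyHilbert_orthogonally_complementable_general
    {E : Type*} [NormedAddCommGroup E] [InnerProductSpace ℂ E]
    {Λ : Type*} [LinearOrder Λ]
    (p : Λ → Submodule ℂ E) [∀ l, CompleteSpace (p l)]
    (hmono : Monotone p)
    (l₀ : Λ) :
    ∃ P : LocOp p,
      P.toFun = (projL (p l₀) : E →ₗ[ℂ] E) ∧
      (∀ x y : E, ⟪P.toFun x, y⟫_ℂ = ⟪x, P.toFun y⟫_ℂ) ∧
      (∀ x : E, P.toFun (P.toFun x) = P.toFun x) ∧
      LinearMap.range P.toFun = p l₀ := by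
  have hcomm : ∀ l, Commute (projL (p l₀)) (projL (p l)) := fun l =>
    Submodule.commute_starProjection_of_le_total ((le_total l₀ l).imp (hmono ·) (hmono ·))
  refine ⟨LocOp.ofCommute _ hcomm, rfl, ?_, ?_, ?_⟩ <;>
    simp only [LocOp.ofCommute_toFun, projL_eq_starProjection, ContinuousLinearMap.coe_coe]
  · exact (p l₀).inner_starProjection_left_eq_right
  · exact fun x => congrArg (· x) (p l₀).isIdempotentElem_starProjection.eq
  · exact (p l₀).range_starProjection

/-- **Proposition 2.3.**  In a locally Hilbert space model `(E, Λ, p)` with linearly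
ordered index set, for each `l₀` the orthogonal projection onto `p l₀` belongs to `𝓛(E)`,
is symmetric and idempotent, and has range `p l₀`; hence `p l₀` is orthogonally
complementable in `E`. -/
theorem locallyHilbert_orthogonally_complementable
    {E : Type*} [NormedAddCommGroup E] [InnerProductSpace ℂ E]
    {Λ : Type*} [LinearOrder Λ]
    (p : Λ → Submodule ℂ E) [∀ l, CompleteSpace (p l)]
    (hmono : Monotone p) (hexh : ∀ x : E, ∃ l, x ∈ p l)
    (l₀ : Λ) :
    ∃ P : LocOp p,
      P.toFun = (projL (p l₀) : E →ₗ[ℂ] E) ∧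
      (∀ x y : E, ⟪P.toFun x, y⟫_ℂ = ⟪x, P.toFun y⟫_ℂ) ∧
      (∀ x : E, P.toFun (P.toFun x) = P.toFun x) ∧
      LinearMap.range P.toFun = p l₀ :=
  locallyHilbert_orthogonally_complementable_general p hmono l₀
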